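/- Let Λ = {λ₁, λ₂, λ₃, λ₄} be real with λ₁ ≥ λ₂ ≥ 0 > λ₃ ≥ λ₄, λ₂ + λ₃ < 0, λ₁ ≥ |λⱼ| for j = 2,3,4, and λ₁+λ₂+λ₃+λ₄ ≥ 0. Then Λ is the spectrum of a 4×4 centrosymmetric nonnegative matrix. -/

import Mathlib

open Matrix Polynomial

/-- The n×n exchange (counteridentity) matrix. -/
def Jmat (n : ℕ) : Matrix (Fin n) (Fin n) ℝ :=
  Matrix.of fun i j => if (i : ℕ) + (j : ℕ) = n - 1 then 1 else 0

/-!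
Conjugation by `[[I, J], [J, -I]]` block-diagonalises the centrosymmetric matrix
`[[A, JBJ], [B, JAJ]]` into `A + JB ⊕ A - JB`, so its spectrum is the union of the spectra of
`A + JB` and `A - JB`. Take `A + JB` to be the 2×2 matrix `[[-λ₃, 1], [-λ₃ s - λ₁λ₂, s]]`,
`s = λ₁ + λ₂ + λ₃`, which has trace `λ₁ + λ₂` and determinant `λ₁λ₂`, and `A - JB = diag(λ₃, λ₄)`.
Then `A` and `JB` are half the sum and half the difference of these two matrices, and their
entries are `0`, `1/2`, `-λ₃`, `-(λ₁ + λ₃)(λ₂ + λ₃)/2` and `(s ± λ₄)/2`, all nonnegative.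
-/

theorem Jmat_apply {n : ℕ} (i j : Fin n) : Jmat n i j = if j = i.rev then 1 else 0 := by
  simp only [Jmat, of_apply, Fin.ext_iff, Fin.val_rev]
  congr 1
  apply propext
  omega

theorem Jmat_mul {n : ℕ} (M : Matrix (Fin n) (Fin n) ℝ) : Jmat n * M = M.submatrix Fin.rev id := by
  ext i j
  simp [mul_apply, Jmat_apply]

theorem mul_Jmat {n : ℕ} (M : Matrix (Fin n) (Fin n) ℝ) : M * Jmat n = M.submatrix id Fin.rev := by
  ext i j
  simp [mul_apply, Jmat_apply, eq_comm (a := j), Fin.rev_eq_iff]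

theorem Jmat_mul_mul_Jmat {n : ℕ} (M : Matrix (Fin n) (Fin n) ℝ) :
    Jmat n * M * Jmat n = M.submatrix Fin.rev Fin.rev := by
  rw [Jmat_mul, mul_Jmat, submatrix_submatrix]; rfl

/-- The block matrix `[[A, JBJ], [B, JAJ]]`, `J` the exchange matrix. -/
def centroBlock {α : Type*} (A B : Matrix (Fin 2) (Fin 2) α) : Matrix (Fin 4) (Fin 4) α :=
  !![A 0 0, A 0 1, B 1 1, B 1 0;
     A 1 0, A 1 1, B 0 1, B 0 0;
     B 0 0, B 0 1, A 1 1, A 1 0;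
     B 1 0, B 1 1, A 0 1, A 0 0]

theorem centroBlock_submatrix_rev {α : Type*} (A B : Matrix (Fin 2) (Fin 2) α) :
    (centroBlock A B).submatrix Fin.rev Fin.rev = centroBlock A B := by
  ext i j
  fin_cases i <;> fin_cases j <;> rfl

theorem centroBlock_nonneg {α : Type*} [Zero α] [LE α] {A B : Matrix (Fin 2) (Fin 2) α}
    (hA : ∀ i j, 0 ≤ A i j) (hB : ∀ i j, 0 ≤ B i j) (i j : Fin 4) : 0 ≤ centroBlock A B i j := by
  fin_cases i <;> fin_cases j <;> simp [centroBlock, hA, hB]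

section CommRing

variable {R : Type*} [CommRing R]

theorem det_centroBlock (A B : Matrix (Fin 2) (Fin 2) R) :
    (centroBlock A B).det =
      (A + B.submatrix Fin.rev id).det * (A - B.submatrix Fin.rev id).det := by
  simp [centroBlock, det_succ_row_zero, Fin.sum_univ_succ, Fin.succAbove]
  ring

theorem charmatrix_centroBlock (A B : Matrix (Fin 2) (Fin 2) R) :
    charmatrix (centroBlock A B) = centroBlock (charmatrix A) (-B.map C) := by
  ext i j
  fin_cases i <;> fin_cases j <;> simp [centroBlock]

theorem charpoly_centroBlock (A B : Matrix (Fin 2) (Fin 2) R) :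
    (centroBlock A B).charpoly =
      (A + B.submatrix Fin.rev id).charpoly * (A - B.submatrix Fin.rev id).charpoly := by
  rw [charpoly, charmatrix_centroBlock, det_centroBlock, charpoly, charpoly]
  congr 2 <;> ext i j : 2 <;> by_cases h : i = j <;> simp [h] <;> ring

theorem charpoly_fin_two_of_roots [Nontrivial R] (a b c : R) :
    !![-c, 1; -c * (a + b + c) - a * b, a + b + c].charpoly = (X - C a) * (X - C b) := by
  rw [charpoly_fin_two, trace_fin_two_of, det_fin_two_of]
  simp only [map_sub, map_mul, map_add, map_neg, map_one]
  ring

end CommRing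

/-- The centrosymmetric matrix `[[A, JBJ], [B, JAJ]]` with `A + JB = P` and `A - JB = D`. -/
noncomputable def centroOfSumDiff (P D : Matrix (Fin 2) (Fin 2) ℝ) : Matrix (Fin 4) (Fin 4) ℝ :=
  centroBlock ((1 / 2 : ℝ) • (P + D)) (((1 / 2 : ℝ) • (P - D)).submatrix Fin.rev id)

theorem charpoly_centroOfSumDiff (P D : Matrix (Fin 2) (Fin 2) ℝ) :
    (centroOfSumDiff P D).charpoly = P.charpoly * D.charpoly := by
  rw [centroOfSumDiff, charpoly_centroBlock, submatrix_submatrix, Fin.rev_involutive.comp_self]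
  congr 2 <;> ext i j <;> simp <;> ring

theorem Jmat_mul_centroOfSumDiff_mul_Jmat (P D : Matrix (Fin 2) (Fin 2) ℝ) :
    Jmat 4 * centroOfSumDiff P D * Jmat 4 = centroOfSumDiff P D := by
  rw [Jmat_mul_mul_Jmat, centroOfSumDiff, centroBlock_submatrix_rev]

theorem centroOfSumDiff_nonneg {P D : Matrix (Fin 2) (Fin 2) ℝ}
    (hadd : ∀ i j, 0 ≤ (P + D) i j) (hsub : ∀ i j, 0 ≤ (P - D) i j) (i j : Fin 4) :
    0 ≤ centroOfSumDiff P D i j :=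
  centroBlock_nonneg (fun i j => by simpa using hadd i j) (fun i j => by simpa using hsub _ _) i j

theorem four_reals_two_negative_centrosymmetric_general (l1 l2 l3 l4 : ℝ)
    (h3 : l3 < 0) (h34 : l4 ≤ l3)
    (h23 : l2 + l3 < 0)
    (hd3 : |l3| ≤ l1)
    (hsum : 0 ≤ l1 + l2 + l3 + l4) :
    ∃ M : Matrix (Fin 4) (Fin 4) ℝ, Jmat 4 * M * Jmat 4 = M ∧ (∀ i j, 0 ≤ M i j) ∧
      M.charpoly = (X - C l1) * (X - C l2) * (X - C l3) * (X - C l4) := by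
  have hl13 : 0 ≤ l1 + l3 := neg_le_iff_add_nonneg'.mp (abs_le.mp hd3).1
  have hp : 0 ≤ -l3 * (l1 + l2 + l3) - l1 * l2 := by
    linarith [mul_nonpos_of_nonneg_of_nonpos hl13 h23.le]
  set P := !![-l3, 1; -l3 * (l1 + l2 + l3) - l1 * l2, l1 + l2 + l3]
  set D := diagonal ![l3, l4]
  refine ⟨centroOfSumDiff P D, Jmat_mul_centroOfSumDiff_mul_Jmat P D,
    centroOfSumDiff_nonneg ?_ ?_, ?_⟩
  · intro i j
    fin_cases i <;> fin_cases j <;> simp [P, D] <;> linarith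
  · intro i j
    fin_cases i <;> fin_cases j <;> simp [P, D] <;> linarith
  · rw [charpoly_centroOfSumDiff, charpoly_fin_two_of_roots, charpoly_diagonal, Fin.prod_univ_two]
    simp only [cons_val_zero, cons_val_one]
    ring

theorem four_reals_two_negative_centrosymmetric (l1 l2 l3 l4 : ℝ)
    (h12 : l2 ≤ l1) (h2 : 0 ≤ l2) (h3 : l3 < 0) (h34 : l4 ≤ l3)
    (h23 : l2 + l3 < 0)
    (hd2 : |l2| ≤ l1) (hd3 : |l3| ≤ l1) (hd4 : |l4| ≤ l1)
    (hsum : 0 ≤ l1 + l2 + l3 + l4) :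
    ∃ M : Matrix (Fin 4) (Fin 4) ℝ, Jmat 4 * M * Jmat 4 = M ∧ (∀ i j, 0 ≤ M i j) ∧
      M.charpoly = (X - C l1) * (X - C l2) * (X - C l3) * (X - C l4) :=
  four_reals_two_negative_centrosymmetric_general l1 l2 l3 l4 h3 h34 h23 hd3 hsum
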